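/- Marginal coverage of hierarchical conformal prediction (HCP), upper bound: Suppose the groups Z̃_1,…,Z̃_{K+1} satisfy hierarchical exchangeability, the HCP prediction set Ĉ at level α ∈ (0,1) is constructed from training groups Z̃_1,…,Z̃_{K₀} and calibration groups Z̃_{K₀+1},…,Z̃_K, the test point is (X_test, Y_test) = Z_{K+1,1}, and additionally s(Z_{k,i}) ≠ s(Z_{k',i'}) almost surely for all pairs of indices with k ≠ k' among the calibration and test groups. Then P(Y_test ∈ Ĉ(X_test)) ≤ 1 − α + 2/(K₁ + 1). -/

import Mathlib

open MeasureTheory ProbabilityTheory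
open scoped ENNReal

noncomputable section

/-- Extend a permutation of `Fin m` to `ℕ` by the identity outside `{0, …, m-1}`. -/
def permExt {m : ℕ} (σ : Equiv.Perm (Fin m)) : ℕ → ℕ :=
  fun i => if h : i < m then (σ ⟨i, h⟩ : ℕ) else i

/-- The representation of the groups `0, …, L-1` of a hierarchical data set:
group `k` is recorded as the pair of its size `N k ω` and its sequence of observations. -/
def hierData {Ω 𝒵 : Type*} (L : ℕ) (N : ℕ → Ω → ℕ) (Z : ℕ → ℕ → Ω → 𝒵) :
    Ω → Fin L → ℕ × (ℕ → 𝒵) :=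
  fun ω k => (N k.1 ω, fun i => Z k.1 i ω)

/-- Hierarchical exchangeability (Definition 1.1) of the groups `0, …, L-1`:
(i) the groups are exchangeable with each other, and (ii) for each `k` and each `m`
with `P(N_k = m) > 0`, conditionally on `N_k = m` the first `m` observations within
group `k` are exchangeable. -/
def HierExch {Ω 𝒵 : Type*} [MeasurableSpace Ω] [MeasurableSpace 𝒵] (L : ℕ)
    (P : Measure Ω) (N : ℕ → Ω → ℕ) (Z : ℕ → ℕ → Ω → 𝒵) : Prop :=
  (∀ σ : Equiv.Perm (Fin L),
      Measure.map (fun ω => fun k : Fin L => hierData L N Z ω (σ k)) P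
        = Measure.map (hierData L N Z) P) ∧
  (∀ k, k < L → ∀ m : ℕ, 0 < P {ω | N k ω = m} → ∀ σ : Equiv.Perm (Fin m),
      Measure.map
          (hierData L N fun k' i => if k' = k then Z k' (permExt σ i) else Z k' i)
          (ProbabilityTheory.cond P {ω | N k ω = m})
        = Measure.map (hierData L N Z) (ProbabilityTheory.cond P {ω | N k ω = m}))

/-- The `(1-β)`-quantile `Q_{1-β}(μ) = inf {t : μ((-∞, t]) ≥ 1-β}` of a distribution `μ`
on the extended real line. -/
def erealQuantile (β : ℝ) (μ : Measure EReal) : EReal :=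
  sInf {t : EReal | ENNReal.ofReal β ≤ μ (Set.Iic t)}

/-- The HCP threshold: the `(1-α)`-quantile of the weighted empirical distribution
`Σ_{k=K₀}^{K-1} Σ_{i<n k} (1/((K₁+1)·(n k))) δ_{sc k i} + (1/(K₁+1)) δ_{+∞}`,
where `K₁ = K - K₀`. -/
def hcpThreshold (α : ℝ) (K₀ K : ℕ) (n : ℕ → ℕ) (sc : ℕ → ℕ → ℝ) : EReal :=
  erealQuantile (1 - α)
    ((∑ k ∈ Finset.Ico K₀ K, ∑ i ∈ Finset.range (n k),
        (((K - K₀ + 1 : ℕ) : ℝ≥0∞) * (n k : ℝ≥0∞))⁻¹ • Measure.dirac ((sc k i : EReal)))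
      + (((K - K₀ + 1 : ℕ) : ℝ≥0∞))⁻¹ • Measure.dirac (⊤ : EReal))

/-!
Put the test group among the calibration groups and, for observation `i` of group `j`, let
`R(j, i)` be the number of scores of the other groups lying strictly below its score, each group
`k` weighted by `1 / N_k`. If the test score is at most the HCP threshold, then
`R(test, 0) ≤ (K₁ + 1)(1 - α) =: x`. Exchangeability of the groups makes `P(R(j, 0) ≤ x)` the
same for all `K₁ + 1` groups `j`, and exchangeability within group `j` turns it into
`E[#{i : R(j, i) ≤ x} / N_j]`. Summing over `j`, `(K₁ + 1) P(R(test, 0) ≤ x)` is the expectation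
of a weighted count which is at most `x + 2` when scores in different groups differ.
-/

open Finset

section Counting

variable {ι : Type*}

lemma inv_mul_card_filter_range_le_one (n : ℕ) (p : ℕ → Prop) [DecidablePred p] :
    (n : ℝ≥0∞)⁻¹ * #{i ∈ range n | p i} ≤ 1 :=
  calc (n : ℝ≥0∞)⁻¹ * #{i ∈ range n | p i} ≤ (n : ℝ≥0∞)⁻¹ * n := by
        gcongr; exact_mod_cast (card_filter_le _ _).trans (card_range n).le
    _ ≤ 1 := ENNReal.inv_mul_le_one _

lemma sum_filter_sigma_inv_eq (G : Finset ι) (n : ι → ℕ) (q : (_ : ι) × ℕ → Prop)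
    [DecidablePred q] :
    ∑ p ∈ (G.sigma fun j => range (n j)) with q p, (n p.1 : ℝ≥0∞)⁻¹
      = ∑ j ∈ G, (n j : ℝ≥0∞)⁻¹ * #{i ∈ range (n j) | q ⟨j, i⟩} := by
  rw [sum_filter, sum_sigma]
  refine sum_congr rfl fun j _ => ?_
  rw [natCast_card_filter, mul_sum]
  exact sum_congr rfl fun i _ => by split_ifs <;> simp

variable [DecidableEq ι]

def massBelow (G : Finset ι) (n : ι → ℕ) (sc : ι → ℕ → ℝ) (j : ι) (t : ℝ) : ℝ≥0∞ :=
  ∑ k ∈ G.erase j, (n k : ℝ≥0∞)⁻¹ * #{i ∈ range (n k) | sc k i < t}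

lemma massBelow_add_inv_mul_card {G : Finset ι} (n : ι → ℕ) (sc : ι → ℕ → ℝ) {j : ι}
    (hj : j ∈ G) (t : ℝ) :
    massBelow G n sc j t + (n j : ℝ≥0∞)⁻¹ * #{i ∈ range (n j) | sc j i < t}
      = ∑ k ∈ G, (n k : ℝ≥0∞)⁻¹ * #{i ∈ range (n k) | sc k i < t} :=
  sum_erase_add G _ hj

lemma massBelow_map {ι κ : Type*} [DecidableEq ι] [DecidableEq κ] (e : ι ↪ κ) (G : Finset ι)
    (n : κ → ℕ) (sc : κ → ℕ → ℝ) (j : ι) (t : ℝ) :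
    massBelow (G.map e) n sc (e j) t = massBelow G (n ∘ e) (fun k => sc (e k)) j t := by
  rw [massBelow, ← map_erase, sum_map]
  rfl

/-- Order the points of the groups by score and look at the highest one `p₀` that passes the
test: every point of lower score is counted in `massBelow` at `p₀` or lies in the group of `p₀`,
and every other passing point has the same score as `p₀`, hence lies in the group of `p₀`. -/
theorem sum_inv_mul_card_massBelow_le {G : Finset ι} {n : ι → ℕ} {sc : ι → ℕ → ℝ}
    (hsep : ∀ k ∈ G, ∀ k' ∈ G, k ≠ k' → ∀ i < n k, ∀ i' < n k', sc k i ≠ sc k' i')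
    (x : ℝ≥0∞) :
    ∑ j ∈ G, (n j : ℝ≥0∞)⁻¹ * #{i ∈ range (n j) | massBelow G n sc j (sc j i) ≤ x}
      ≤ x + 2 := by
  set T := G.sigma fun j => range (n j)
  rw [← sum_filter_sigma_inv_eq G n fun p => massBelow G n sc p.1 (sc p.1 p.2) ≤ x]
  set S := T.filter fun p => massBelow G n sc p.1 (sc p.1 p.2) ≤ x
  rcases S.eq_empty_or_nonempty with hS | hS
  · simp [hS]
  obtain ⟨p₀, hp₀S, hp₀max⟩ := exists_max_image S (fun p => sc p.1 p.2) hS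
  obtain ⟨hp₀T, hp₀x⟩ := mem_filter.mp hp₀S
  obtain ⟨hp₀G, hp₀n⟩ := mem_sigma.mp hp₀T
  set v := sc p₀.1 p₀.2
  have hbelow : ∑ p ∈ S with sc p.1 p.2 < v, (n p.1 : ℝ≥0∞)⁻¹ ≤ x + 1 :=
    calc ∑ p ∈ S with sc p.1 p.2 < v, (n p.1 : ℝ≥0∞)⁻¹
        ≤ ∑ p ∈ T with sc p.1 p.2 < v, (n p.1 : ℝ≥0∞)⁻¹ :=
          sum_le_sum_of_subset (filter_subset_filter _ (filter_subset _ _))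
      _ = massBelow G n sc p₀.1 v + (n p₀.1 : ℝ≥0∞)⁻¹ * #{i ∈ range (n p₀.1) | sc p₀.1 i < v} := by
          rw [sum_filter_sigma_inv_eq, massBelow_add_inv_mul_card n sc hp₀G]
      _ ≤ x + 1 := add_le_add hp₀x (inv_mul_card_filter_range_le_one _ _)
  have htied : ∑ p ∈ S with ¬ sc p.1 p.2 < v, (n p.1 : ℝ≥0∞)⁻¹ ≤ 1 :=
    calc ∑ p ∈ S with ¬ sc p.1 p.2 < v, (n p.1 : ℝ≥0∞)⁻¹
        ≤ ∑ p ∈ T with p.1 = p₀.1, (n p.1 : ℝ≥0∞)⁻¹ := by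
          refine sum_le_sum_of_subset fun p hp => ?_
          obtain ⟨hpS, hpv⟩ := mem_filter.mp hp
          have hpT := (mem_filter.mp hpS).1
          refine mem_filter.mpr ⟨hpT, by_contra fun hne => ?_⟩
          exact hsep _ (mem_sigma.mp hpT).1 _ hp₀G hne _ (mem_range.mp (mem_sigma.mp hpT).2) _
            (mem_range.mp hp₀n) (le_antisymm (hp₀max p hpS) (not_lt.mp hpv))
      _ = (n p₀.1 : ℝ≥0∞)⁻¹ * #{i ∈ range (n p₀.1) | p₀.1 = p₀.1} := by
          rw [sum_filter_sigma_inv_eq]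
          refine sum_eq_single_of_mem _ hp₀G fun j _ hj => ?_
          simp [hj]
      _ ≤ 1 := inv_mul_card_filter_range_le_one _ _
  calc ∑ p ∈ S, (n p.1 : ℝ≥0∞)⁻¹
      = ∑ p ∈ S with sc p.1 p.2 < v, (n p.1 : ℝ≥0∞)⁻¹
        + ∑ p ∈ S with ¬ sc p.1 p.2 < v, (n p.1 : ℝ≥0∞)⁻¹ :=
        (sum_filter_add_sum_filter_not _ _ _).symm
    _ ≤ x + 1 + 1 := add_le_add hbelow htied
    _ = x + 2 := by ring

end Counting

lemma measure_Iio_le_of_forall_lt {μ : Measure EReal} {t : EReal} {c : ℝ≥0∞}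
    (h : ∀ u < t, μ (Set.Iic u) ≤ c) : μ (Set.Iio t) ≤ c := by
  rcases eq_bot_or_bot_lt t with rfl | ht
  · simp
  obtain ⟨u, hu_mono, hu_lt, hu_lim⟩ := exists_seq_strictMono_tendsto' ht
  have hunion : Set.Iio t = ⋃ m, Set.Iic (u m) := by
    ext z
    simp only [Set.mem_Iio, Set.mem_iUnion, Set.mem_Iic]
    refine ⟨fun hz => ?_, fun ⟨m, hm⟩ => hm.trans_lt (hu_lt m).2⟩
    obtain ⟨m, hm⟩ := (hu_lim.eventually (Ioi_mem_nhds hz)).exists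
    exact ⟨m, le_of_lt hm⟩
  rw [hunion, Monotone.measure_iUnion fun a b hab => Set.Iic_subset_Iic.mpr (hu_mono.monotone hab)]
  exact iSup_le fun m => h _ (hu_lt m).2

lemma measure_Iio_le_of_le_erealQuantile {β : ℝ} {μ : Measure EReal} {t : EReal}
    (ht : t ≤ erealQuantile β μ) : μ (Set.Iio t) ≤ ENNReal.ofReal β :=
  measure_Iio_le_of_forall_lt fun _ hu => le_of_not_ge fun hβu =>
    (ht.trans (sInf_le hβu)).not_gt hu

lemma hcpEmpirical_measure_Iio {K₀ K : ℕ} (n : ℕ → ℕ) (sc : ℕ → ℕ → ℝ) (t : ℝ) :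
    ((∑ k ∈ Finset.Ico K₀ K, ∑ i ∈ Finset.range (n k),
        (((K - K₀ + 1 : ℕ) : ℝ≥0∞) * (n k : ℝ≥0∞))⁻¹ • Measure.dirac ((sc k i : EReal)))
      + (((K - K₀ + 1 : ℕ) : ℝ≥0∞))⁻¹ • Measure.dirac (⊤ : EReal)) (Set.Iio t)
      = ((K - K₀ + 1 : ℕ) : ℝ≥0∞)⁻¹ * massBelow (Ico K₀ (K + 1)) n sc K t := by
  have hIco : (Ico K₀ (K + 1)).erase K = Ico K₀ K := by ext; simp; omega
  simp only [Measure.add_apply, Measure.coe_finsetSum, Finset.sum_apply, Measure.smul_apply,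
    Measure.dirac_apply' _ measurableSet_Iio, massBelow, hIco, mul_sum, natCast_card_filter]
  have htop : (⊤ : EReal) ∉ Set.Iio (t : EReal) := fun h => not_top_lt (Set.mem_Iio.mp h)
  rw [Set.indicator_of_notMem htop, smul_zero, add_zero]
  refine sum_congr rfl fun k _ => sum_congr rfl fun i _ => ?_
  rw [smul_eq_mul, ENNReal.mul_inv (by simp) (by simp), mul_assoc]
  by_cases h : sc k i < t <;> simp [h]

lemma massBelow_le_of_le_hcpThreshold {α : ℝ} {K₀ K : ℕ} {n : ℕ → ℕ} {sc : ℕ → ℕ → ℝ}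
    (h : (sc K 0 : EReal) ≤ hcpThreshold α K₀ K n sc) :
    massBelow (Ico K₀ (K + 1)) n sc K (sc K 0)
      ≤ ((K - K₀ + 1 : ℕ) : ℝ≥0∞) * ENNReal.ofReal (1 - α) := by
  rw [← ENNReal.inv_mul_le_iff (by simp) (by simp), ← hcpEmpirical_measure_Iio]
  exact measure_Iio_le_of_le_erealQuantile h

lemma measurable_natCast_card_filter_range {α : Type*} [MeasurableSpace α] {n : α → ℕ}
    (hn : Measurable n) {p : α → ℕ → Prop} [∀ a, DecidablePred (p a)]
    (hp : ∀ i, MeasurableSet {a | p a i}) :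
    Measurable fun a => (#{i ∈ range (n a) | p a i} : ℝ≥0∞) := by
  have hfixed (m : ℕ) : Measurable fun a => (#{i ∈ range m | p a i} : ℝ≥0∞) := by
    simp_rw [natCast_card_filter]
    exact Finset.measurable_sum _ fun i _ => Measurable.ite (hp i) measurable_const measurable_const
  have hjoint : Measurable fun q : α × ℕ => (#{i ∈ range q.2 | p q.1 i} : ℝ≥0∞) :=
    measurable_from_prod_countable_left hfixed
  exact hjoint.comp (f := fun a => (a, n a)) (measurable_id.prodMk hn)

section GroupData

variable {𝒵 : Type*} {L : ℕ}

def permuteWithin (j : Fin L) (τ : ℕ → ℕ) (d : Fin L → ℕ × (ℕ → 𝒵)) : Fin L → ℕ × (ℕ → 𝒵) :=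
  Function.update d j ((d j).1, (d j).2 ∘ τ)

def rankStat (G : Finset (Fin L)) (s : (Fin L → ℕ × (ℕ → 𝒵)) → 𝒵 → ℝ)
    (d : Fin L → ℕ × (ℕ → 𝒵)) (j : Fin L) (i : ℕ) : ℝ≥0∞ :=
  massBelow G (fun k => (d k).1) (fun k i => s d ((d k).2 i)) j (s d ((d j).2 i))

variable {G : Finset (Fin L)} {s : (Fin L → ℕ × (ℕ → 𝒵)) → 𝒵 → ℝ}

lemma rankStat_comp_swap (hs_local : ∀ d d', (∀ k ∉ G, d k = d' k) → s d = s d')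
    {j j' : Fin L} (hj : j ∈ G) (hj' : j' ∈ G) (d : Fin L → ℕ × (ℕ → 𝒵)) (i : ℕ) :
    rankStat G s (d ∘ Equiv.swap j j') j i = rankStat G s d j' i := by
  have hsd : s (d ∘ Equiv.swap j j') = s d := hs_local _ _ fun k hk => by
    rw [Function.comp_apply, Equiv.swap_apply_of_ne_of_ne (ne_of_mem_of_not_mem hj hk).symm
      (ne_of_mem_of_not_mem hj' hk).symm]
  simp only [rankStat, massBelow, hsd, Function.comp_apply, Equiv.swap_apply_left]
  refine sum_equiv (Equiv.swap j j') (fun k => ?_) fun k _ => rfl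
  rw [mem_erase, mem_erase, Equiv.swap_apply_def]
  split_ifs <;> grind

lemma rankStat_permuteWithin (hs_local : ∀ d d', (∀ k ∉ G, d k = d' k) → s d = s d')
    {j : Fin L} (hj : j ∈ G) (τ : ℕ → ℕ) (d : Fin L → ℕ × (ℕ → 𝒵)) (i : ℕ) :
    rankStat G s (permuteWithin j τ d) j i = rankStat G s d j (τ i) := by
  have hsd : s (permuteWithin j τ d) = s d := hs_local _ _ fun k hk =>
    Function.update_of_ne (ne_of_mem_of_not_mem hj hk).symm _ _
  simp only [rankStat, hsd]
  simp only [massBelow, permuteWithin, Function.update_self]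
  refine sum_congr rfl fun k hk => ?_
  rw [Function.update_of_ne (ne_of_mem_erase hk)]
  rfl

lemma measurable_rankStat [MeasurableSpace 𝒵]
    (hs : Measurable fun p : (Fin L → ℕ × (ℕ → 𝒵)) × 𝒵 => s p.1 p.2) (j : Fin L) (i : ℕ) :
    Measurable fun d => rankStat G s d j i := by
  have hsize : ∀ k, Measurable fun d : Fin L → ℕ × (ℕ → 𝒵) => (d k).1 :=
    fun k => measurable_fst.comp (measurable_pi_apply k)
  have hscore : ∀ k i, Measurable fun d : Fin L → ℕ × (ℕ → 𝒵) => s d ((d k).2 i) :=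
    fun k i => hs.comp <| measurable_id.prodMk <|
      (measurable_pi_apply i).comp (measurable_snd.comp (measurable_pi_apply k))
  exact Finset.measurable_sum _ fun k _ =>
    ((measurable_from_nat (f := fun m : ℕ => (m : ℝ≥0∞)⁻¹)).comp (hsize k)).mul
      (measurable_natCast_card_filter_range (hsize k) fun i' =>
        measurableSet_lt (hscore k i') (hscore j i))

end GroupData

lemma lintegral_eq_tsum_setLIntegral_fiber {Ω : Type*} [MeasurableSpace Ω] {μ : Measure Ω}
    {g : Ω → ℕ} (hg : Measurable g) (f : Ω → ℝ≥0∞) :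
    ∫⁻ ω, f ω ∂μ = ∑' m, ∫⁻ ω in {ω | g ω = m}, f ω ∂μ := by
  have hcover : ⋃ m, {ω | g ω = m} = Set.univ := by ext; simp
  rw [← lintegral_iUnion (s := fun m => {ω | g ω = m}) (fun m => hg (measurableSet_singleton m))
    (pairwise_disjoint_fiber g), hcover, Measure.restrict_univ]

lemma permExt_swap_zero {m i : ℕ} (h0 : 0 < m) (hi : i < m) :
    permExt (Equiv.swap (⟨0, h0⟩ : Fin m) ⟨i, hi⟩) 0 = i := by
  simp [permExt, h0]

lemma hierData_ite_eq_permuteWithin {Ω 𝒵 : Type*} {L : ℕ} {N : ℕ → Ω → ℕ} {Z : ℕ → ℕ → Ω → 𝒵}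
    (j : Fin L) (τ : ℕ → ℕ) (ω : Ω) :
    hierData L N (fun k i => if k = j then Z k (τ i) else Z k i) ω
      = permuteWithin j τ (hierData L N Z ω) := by
  funext k
  by_cases h : k = j
  · subst h; simp [hierData, permuteWithin, Function.comp_def]
  · simp [hierData, permuteWithin, h, Fin.val_ne_of_ne h]

section Exchangeability

variable {Ω 𝒵 : Type*} [MeasurableSpace Ω] [MeasurableSpace 𝒵] {P : Measure Ω} {L : ℕ}
  {N : ℕ → Ω → ℕ} {Z : ℕ → ℕ → Ω → 𝒵}

lemma measurable_hierData (hN : ∀ k, Measurable (N k)) (hZ : ∀ k i, Measurable (Z k i)) :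
    Measurable (hierData L N Z) :=
  measurable_pi_lambda _ fun k => (hN k).prodMk (measurable_pi_lambda _ fun i => hZ k i)

lemma HierExch.lintegral_comp_perm (hexch : HierExch L P N Z)
    (hd : Measurable (hierData L N Z)) (σ : Equiv.Perm (Fin L))
    {F : (Fin L → ℕ × (ℕ → 𝒵)) → ℝ≥0∞} (hF : Measurable F) :
    ∫⁻ ω, F (hierData L N Z ω ∘ σ) ∂P = ∫⁻ ω, F (hierData L N Z ω) ∂P := by
  have hdσ : Measurable fun ω => hierData L N Z ω ∘ σ :=
    measurable_pi_lambda _ fun k => (measurable_pi_apply (σ k)).comp hd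
  rw [← lintegral_map hF hdσ, ← lintegral_map hF hd]
  exact congrArg (lintegral · F) (hexch.1 σ)

lemma HierExch.setLIntegral_permuteWithin [IsFiniteMeasure P] (hexch : HierExch L P N Z)
    (hN : ∀ k, Measurable (N k)) (hZ : ∀ k i, Measurable (Z k i)) (j : Fin L) (m : ℕ)
    (σ : Equiv.Perm (Fin m)) {F : (Fin L → ℕ × (ℕ → 𝒵)) → ℝ≥0∞} (hF : Measurable F) :
    ∫⁻ ω in {ω | N j ω = m}, F (permuteWithin j (permExt σ) (hierData L N Z ω)) ∂P
      = ∫⁻ ω in {ω | N j ω = m}, F (hierData L N Z ω) ∂P := by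
  rcases eq_or_ne (P ({ω | N j ω = m})) 0 with h0 | h0
  · rw [setLIntegral_measure_zero _ _ h0, setLIntegral_measure_zero _ _ h0]
  have hd' : Measurable
      (hierData L N fun k i => if k = j then Z k (permExt σ i) else Z k i) :=
    measurable_hierData hN fun k i => by split_ifs <;> exact hZ _ _
  have hcond : ∫⁻ ω, F (permuteWithin j (permExt σ) (hierData L N Z ω)) ∂P[|{ω | N j ω = m}]
      = ∫⁻ ω, F (hierData L N Z ω) ∂P[|{ω | N j ω = m}] := by
    simp_rw [← hierData_ite_eq_permuteWithin]
    rw [← lintegral_map hF hd', hexch.2 j j.2 m (pos_iff_ne_zero.mpr h0) σ,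
      lintegral_map hF (measurable_hierData hN hZ)]
  rwa [ProbabilityTheory.cond, lintegral_smul_measure, lintegral_smul_measure, smul_eq_mul,
    smul_eq_mul, ENNReal.mul_right_inj (ENNReal.inv_ne_zero.mpr (measure_ne_top _ _))
      (ENNReal.inv_ne_top.mpr h0)] at hcond

lemma HierExch.lintegral_eq_lintegral_groupMean [IsFiniteMeasure P] (hexch : HierExch L P N Z)
    (hN₁ : ∀ k ω, 1 ≤ N k ω) (hN : ∀ k, Measurable (N k)) (hZ : ∀ k i, Measurable (Z k i))
    (j : Fin L) {f : (Fin L → ℕ × (ℕ → 𝒵)) → ℕ → ℝ≥0∞} (hf : ∀ i, Measurable fun d => f d i)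
    (hf_perm : ∀ d τ, f (permuteWithin j τ d) 0 = f d (τ 0)) :
    ∫⁻ ω, f (hierData L N Z ω) 0 ∂P
      = ∫⁻ ω, (N j ω : ℝ≥0∞)⁻¹ * ∑ i ∈ range (N j ω), f (hierData L N Z ω) i ∂P := by
  have hfω : ∀ i, Measurable fun ω => f (hierData L N Z ω) i :=
    fun i => (hf i).comp (measurable_hierData hN hZ)
  rw [lintegral_eq_tsum_setLIntegral_fiber (hN j), lintegral_eq_tsum_setLIntegral_fiber (hN j)]
  refine tsum_congr fun m => ?_
  have hS : MeasurableSet {ω | N j ω = m} := hN j (measurableSet_singleton m)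
  rcases Nat.eq_zero_or_pos m with rfl | hm
  · have hempty : {ω | N j ω = 0} = ∅ := Set.eq_empty_of_forall_notMem fun ω (hω : N j ω = 0) => by
      have := hN₁ j ω; omega
    simp [hempty]
  have hfiber : ∀ i < m, ∫⁻ ω in {ω | N j ω = m}, f (hierData L N Z ω) i ∂P
      = ∫⁻ ω in {ω | N j ω = m}, f (hierData L N Z ω) 0 ∂P := fun i hi => by
    rw [← hexch.setLIntegral_permuteWithin hN hZ j m (Equiv.swap ⟨0, hm⟩ ⟨i, hi⟩) (hf 0)]
    simp_rw [hf_perm, permExt_swap_zero hm hi]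
  calc ∫⁻ ω in {ω | N j ω = m}, f (hierData L N Z ω) 0 ∂P
      = (m : ℝ≥0∞)⁻¹ * ∑ i ∈ range m, ∫⁻ ω in {ω | N j ω = m}, f (hierData L N Z ω) i ∂P := by
        rw [sum_congr rfl fun i hi => hfiber i (mem_range.mp hi), sum_const, card_range,
          nsmul_eq_mul, ← mul_assoc, ENNReal.inv_mul_cancel (by simp [hm.ne']) (by simp), one_mul]
    _ = ∫⁻ ω in {ω | N j ω = m}, (m : ℝ≥0∞)⁻¹ * ∑ i ∈ range m, f (hierData L N Z ω) i ∂P := by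
        rw [lintegral_const_mul _ (Finset.measurable_sum _ fun i _ => hfω i),
          lintegral_finsetSum _ fun i _ => hfω i]
    _ = _ := setLIntegral_congr_fun hS fun ω hω => by rw [show N j ω = m from hω]

lemma HierExch.measure_rankStat_le_eq_lintegral [IsFiniteMeasure P] (hexch : HierExch L P N Z)
    (hN₁ : ∀ k ω, 1 ≤ N k ω) (hN : ∀ k, Measurable (N k)) (hZ : ∀ k i, Measurable (Z k i))
    {G : Finset (Fin L)} {s : (Fin L → ℕ × (ℕ → 𝒵)) → 𝒵 → ℝ}
    (hs : Measurable fun p : (Fin L → ℕ × (ℕ → 𝒵)) × 𝒵 => s p.1 p.2)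
    (hs_local : ∀ d d', (∀ k ∉ G, d k = d' k) → s d = s d')
    {j₀ j : Fin L} (hj₀ : j₀ ∈ G) (hj : j ∈ G) (x : ℝ≥0∞) :
    P {ω | rankStat G s (hierData L N Z ω) j₀ 0 ≤ x}
      = ∫⁻ ω, (N j ω : ℝ≥0∞)⁻¹
          * #{i ∈ range (N j ω) | rankStat G s (hierData L N Z ω) j i ≤ x} ∂P := by
  have hd := measurable_hierData (L := L) hN hZ
  set φ : Fin L → (Fin L → ℕ × (ℕ → 𝒵)) → ℕ → ℝ≥0∞ :=
    fun j d i => if rankStat G s d j i ≤ x then 1 else 0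
  have hφ : ∀ j i, Measurable fun d => φ j d i := fun j i =>
    Measurable.ite (measurable_rankStat hs j i measurableSet_Iic) measurable_const
      measurable_const
  have hevent : MeasurableSet {ω | rankStat G s (hierData L N Z ω) j₀ 0 ≤ x} :=
    (measurable_rankStat hs j₀ 0).comp hd measurableSet_Iic
  calc P {ω | rankStat G s (hierData L N Z ω) j₀ 0 ≤ x}
      = ∫⁻ ω, φ j₀ (hierData L N Z ω) 0 ∂P := by
        rw [← lintegral_indicator_one hevent]
        exact lintegral_congr fun ω => by simp [φ, Set.indicator_apply]
    _ = ∫⁻ ω, φ j₀ (hierData L N Z ω ∘ Equiv.swap j₀ j) 0 ∂P :=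
        (hexch.lintegral_comp_perm hd _ (hφ j₀ 0)).symm
    _ = ∫⁻ ω, φ j (hierData L N Z ω) 0 ∂P := by
        simp only [φ, rankStat_comp_swap hs_local hj₀ hj]
    _ = ∫⁻ ω, (N j ω : ℝ≥0∞)⁻¹ * ∑ i ∈ range (N j ω), φ j (hierData L N Z ω) i ∂P :=
        hexch.lintegral_eq_lintegral_groupMean hN₁ hN hZ j (hφ j) fun d τ => by
          simp only [φ, rankStat_permuteWithin hs_local hj]
    _ = _ := by simp only [φ, natCast_card_filter]

theorem HierExch.card_mul_measure_rankStat_le [IsProbabilityMeasure P] (hexch : HierExch L P N Z)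
    (hN₁ : ∀ k ω, 1 ≤ N k ω) (hN : ∀ k, Measurable (N k)) (hZ : ∀ k i, Measurable (Z k i))
    {G : Finset (Fin L)} {s : (Fin L → ℕ × (ℕ → 𝒵)) → 𝒵 → ℝ}
    (hs : Measurable fun p : (Fin L → ℕ × (ℕ → 𝒵)) × 𝒵 => s p.1 p.2)
    (hs_local : ∀ d d', (∀ k ∉ G, d k = d' k) → s d = s d')
    (hsep : ∀ᵐ ω ∂P, ∀ k ∈ G, ∀ k' ∈ G, k ≠ k' → ∀ i < N k ω, ∀ i' < N k' ω,
      s (hierData L N Z ω) (Z k i ω) ≠ s (hierData L N Z ω) (Z k' i' ω))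
    {j₀ : Fin L} (hj₀ : j₀ ∈ G) (x : ℝ≥0∞) :
    #G * P {ω | rankStat G s (hierData L N Z ω) j₀ 0 ≤ x} ≤ x + 2 := by
  have hd := measurable_hierData (L := L) hN hZ
  have hweighted : ∀ j : Fin L, Measurable fun ω => (N j ω : ℝ≥0∞)⁻¹
      * #{i ∈ range (N j ω) | rankStat G s (hierData L N Z ω) j i ≤ x} := fun j =>
    ((measurable_from_nat (f := fun m : ℕ => (m : ℝ≥0∞)⁻¹)).comp (hN j)).mul
      (measurable_natCast_card_filter_range (hN j) fun i =>
        (measurable_rankStat hs j i).comp hd measurableSet_Iic)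
  calc (#G : ℝ≥0∞) * P {ω | rankStat G s (hierData L N Z ω) j₀ 0 ≤ x}
      = ∑ j ∈ G, ∫⁻ ω, (N j ω : ℝ≥0∞)⁻¹
          * #{i ∈ range (N j ω) | rankStat G s (hierData L N Z ω) j i ≤ x} ∂P := by
        rw [← nsmul_eq_mul, ← sum_const, sum_congr rfl fun j hj =>
          hexch.measure_rankStat_le_eq_lintegral hN₁ hN hZ hs hs_local hj₀ hj x]
    _ = ∫⁻ ω, ∑ j ∈ G, (N j ω : ℝ≥0∞)⁻¹
          * #{i ∈ range (N j ω) | rankStat G s (hierData L N Z ω) j i ≤ x} ∂P :=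
        (lintegral_finsetSum G fun j _ => hweighted j).symm
    _ ≤ ∫⁻ _, x + 2 ∂P := lintegral_mono_ae <| hsep.mono fun ω hω =>
        sum_inv_mul_card_massBelow_le hω x
    _ = x + 2 := by simp

end Exchangeability

section Split

variable {𝒵 : Type*} {K₀ L : ℕ}

def calibGroups (K₀ L : ℕ) : Finset (Fin L) := {k | K₀ ≤ (k : ℕ)}

@[simp]
lemma mem_calibGroups {k : Fin L} : k ∈ calibGroups K₀ L ↔ K₀ ≤ k := by
  simp [calibGroups]

lemma map_valEmbedding_calibGroups : (calibGroups K₀ L).map Fin.valEmbedding = Ico K₀ L := by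
  ext a
  simp only [mem_map, mem_calibGroups, Fin.valEmbedding_apply, mem_Ico]
  exact ⟨fun ⟨k, hk, hka⟩ => hka ▸ ⟨hk, k.2⟩, fun ⟨h₁, h₂⟩ => ⟨⟨a, h₂⟩, h₁, rfl⟩⟩

lemma card_calibGroups : #(calibGroups K₀ L) = L - K₀ := by
  rw [← card_map Fin.valEmbedding, map_valEmbedding_calibGroups, Nat.card_Ico]

def trainedScore (h : K₀ ≤ L) (A : (Fin K₀ → ℕ × (ℕ → 𝒵)) → 𝒵 → ℝ)
    (d : Fin L → ℕ × (ℕ → 𝒵)) : 𝒵 → ℝ :=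
  A (d ∘ Fin.castLE h)

lemma measurable_trainedScore [MeasurableSpace 𝒵] (h : K₀ ≤ L)
    {A : (Fin K₀ → ℕ × (ℕ → 𝒵)) → 𝒵 → ℝ}
    (hA : Measurable fun p : (Fin K₀ → ℕ × (ℕ → 𝒵)) × 𝒵 => A p.1 p.2) :
    Measurable fun p : (Fin L → ℕ × (ℕ → 𝒵)) × 𝒵 => trainedScore h A p.1 p.2 := by
  have hrestr : Measurable fun d : Fin L → ℕ × (ℕ → 𝒵) => d ∘ Fin.castLE h :=
    measurable_pi_lambda _ fun k => measurable_pi_apply (Fin.castLE h k)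
  exact hA.comp (hrestr.prodMap measurable_id)

lemma trainedScore_congr (h : K₀ ≤ L) (A : (Fin K₀ → ℕ × (ℕ → 𝒵)) → 𝒵 → ℝ)
    {d d' : Fin L → ℕ × (ℕ → 𝒵)} (hdd' : ∀ k ∉ calibGroups K₀ L, d k = d' k) :
    trainedScore h A d = trainedScore h A d' :=
  congrArg A <| funext fun k => hdd' _ (by simp)

lemma rankStat_le_of_le_hcpThreshold {Ω : Type*} {K : ℕ} (h : K₀ ≤ K + 1)
    (A : (Fin K₀ → ℕ × (ℕ → 𝒵)) → 𝒵 → ℝ) (N : ℕ → Ω → ℕ) (Z : ℕ → ℕ → Ω → 𝒵) {α : ℝ} {ω : Ω}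
    (hω : (A (hierData K₀ N Z ω) (Z K 0 ω) : EReal)
      ≤ hcpThreshold α K₀ K (fun k => N k ω) fun k i => A (hierData K₀ N Z ω) (Z k i ω)) :
    rankStat (calibGroups K₀ (K + 1)) (trainedScore h A) (hierData (K + 1) N Z ω) (Fin.last K) 0
      ≤ ((K - K₀ + 1 : ℕ) : ℝ≥0∞) * ENNReal.ofReal (1 - α) := by
  have hmap := massBelow_map Fin.valEmbedding (calibGroups K₀ (K + 1)) (fun k => N k ω)
    (fun k i => A (hierData K₀ N Z ω) (Z k i ω)) (Fin.last K) (A (hierData K₀ N Z ω) (Z K 0 ω))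
  rw [map_valEmbedding_calibGroups] at hmap
  exact hmap.symm.trans_le (massBelow_le_of_le_hcpThreshold hω)

end Split

lemma le_ofReal_add_two_div_of_mul_le {p : ℝ≥0∞} {a : ℝ} (ha : 0 ≤ a) (m : ℕ)
    (h : ((m + 1 : ℕ) : ℝ≥0∞) * p ≤ ((m + 1 : ℕ) : ℝ≥0∞) * ENNReal.ofReal a + 2) :
    p ≤ ENNReal.ofReal (a + 2 / ((m : ℝ) + 1)) := by
  have hm0 : ((m + 1 : ℕ) : ℝ≥0∞) ≠ 0 := by simp
  have hmtop : ((m + 1 : ℕ) : ℝ≥0∞) ≠ ⊤ := by simp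
  rw [ENNReal.mul_le_iff_le_inv hm0 hmtop, mul_add, ← mul_assoc, ENNReal.inv_mul_cancel hm0 hmtop,
    one_mul, ← ENNReal.div_eq_inv_mul] at h
  rwa [ENNReal.ofReal_add ha (by positivity), ENNReal.ofReal_div_of_pos (by positivity),
    ENNReal.ofReal_ofNat, show (m : ℝ) + 1 = ((m + 1 : ℕ) : ℝ) by push_cast; ring,
    ENNReal.ofReal_natCast]

theorem hcp_marginal_coverage_upper_general
    {𝒳 𝒴 Ω : Type*} [MeasurableSpace 𝒳] [MeasurableSpace 𝒴] [MeasurableSpace Ω]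
    (P : Measure Ω) [IsProbabilityMeasure P]
    (K K₀ : ℕ) (hK₀ : K₀ ≤ K)
    (N : ℕ → Ω → ℕ) (Z : ℕ → ℕ → Ω → 𝒳 × 𝒴)
    (hN : ∀ k ω, 1 ≤ N k ω)
    (hNmeas : ∀ k, Measurable (N k)) (hZmeas : ∀ k i, Measurable (Z k i))
    (hexch : HierExch (K + 1) P N Z)
    (α : ℝ) (hα₁ : α < 1)
    (A : (Fin K₀ → ℕ × (ℕ → 𝒳 × 𝒴)) → 𝒳 × 𝒴 → ℝ)
    (hA : Measurable fun p : (Fin K₀ → ℕ × (ℕ → 𝒳 × 𝒴)) × (𝒳 × 𝒴) => A p.1 p.2)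
    (hdist : ∀ᵐ ω ∂P, ∀ k k', K₀ ≤ k → k ≤ K → K₀ ≤ k' → k' ≤ K → k ≠ k' →
      ∀ i < N k ω, ∀ i' < N k' ω,
        A (hierData K₀ N Z ω) (Z k i ω) ≠ A (hierData K₀ N Z ω) (Z k' i' ω)) :
    P {ω | (A (hierData K₀ N Z ω) (Z K 0 ω) : EReal)
        ≤ hcpThreshold α K₀ K (fun k => N k ω)
            fun k i => A (hierData K₀ N Z ω) (Z k i ω)}
      ≤ ENNReal.ofReal (1 - α + 2 / (((K - K₀ : ℕ) : ℝ) + 1)) := by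
  have hK₀' : K₀ ≤ K + 1 := by omega
  have hsep : ∀ᵐ ω ∂P, ∀ k ∈ calibGroups K₀ (K + 1), ∀ k' ∈ calibGroups K₀ (K + 1), k ≠ k' →
      ∀ i < N k ω, ∀ i' < N k' ω, trainedScore hK₀' A (hierData (K + 1) N Z ω) (Z k i ω)
        ≠ trainedScore hK₀' A (hierData (K + 1) N Z ω) (Z k' i' ω) :=
    hdist.mono fun ω hω k hk k' hk' hne =>
      hω k k' (mem_calibGroups.mp hk) (by omega) (mem_calibGroups.mp hk') (by omega)
        (Fin.val_ne_of_ne hne)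
  have hcore := hexch.card_mul_measure_rankStat_le hN hNmeas hZmeas
    (measurable_trainedScore hK₀' hA) (fun _ _ => trainedScore_congr hK₀' A) hsep
    (j₀ := Fin.last K) (by simpa using hK₀) (((K - K₀ + 1 : ℕ) : ℝ≥0∞) * ENNReal.ofReal (1 - α))
  rw [card_calibGroups, Nat.sub_add_comm hK₀] at hcore
  refine le_ofReal_add_two_div_of_mul_le (by linarith) _ (le_trans ?_ hcore)
  gcongr
  exact rankStat_le_of_le_hcpThreshold hK₀' A N Z

/-- **Theorem (Marginal coverage for HCP, upper bound).**
In the HCP setting, if moreover the scores of observations lying in distinct groups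
(among the calibration and test groups) are almost surely distinct, then
`P(Y_test ∈ Ĉ(X_test)) ≤ 1 - α + 2/(K₁+1)`. -/
theorem hcp_marginal_coverage_upper
    {𝒳 𝒴 Ω : Type*} [MeasurableSpace 𝒳] [MeasurableSpace 𝒴] [MeasurableSpace Ω]
    (P : Measure Ω) [IsProbabilityMeasure P]
    (K K₀ : ℕ) (hK₀ : K₀ ≤ K)
    (N : ℕ → Ω → ℕ) (Z : ℕ → ℕ → Ω → 𝒳 × 𝒴)
    (hN : ∀ k ω, 1 ≤ N k ω)
    (hNmeas : ∀ k, Measurable (N k)) (hZmeas : ∀ k i, Measurable (Z k i))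
    (hexch : HierExch (K + 1) P N Z)
    (α : ℝ) (hα₀ : 0 < α) (hα₁ : α < 1)
    (A : (Fin K₀ → ℕ × (ℕ → 𝒳 × 𝒴)) → 𝒳 × 𝒴 → ℝ)
    (hA : Measurable fun p : (Fin K₀ → ℕ × (ℕ → 𝒳 × 𝒴)) × (𝒳 × 𝒴) => A p.1 p.2)
    (hdist : ∀ᵐ ω ∂P, ∀ k k', K₀ ≤ k → k ≤ K → K₀ ≤ k' → k' ≤ K → k ≠ k' →
      ∀ i < N k ω, ∀ i' < N k' ω,
        A (hierData K₀ N Z ω) (Z k i ω) ≠ A (hierData K₀ N Z ω) (Z k' i' ω)) :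
    P {ω | (A (hierData K₀ N Z ω) (Z K 0 ω) : EReal)
        ≤ hcpThreshold α K₀ K (fun k => N k ω)
            fun k i => A (hierData K₀ N Z ω) (Z k i ω)}
      ≤ ENNReal.ofReal (1 - α + 2 / (((K - K₀ : ℕ) : ℝ) + 1)) :=
  hcp_marginal_coverage_upper_general P K K₀ hK₀ N Z hN hNmeas hZmeas hexch α hα₁ A hA hdist
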